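/- Let f be μ-strongly convex (μ > 0) and L-smooth, g proper convex lsc, 0 < s ≤ 1/L, and x* a minimizer of F = f + g. Then for any x ∈ H: F(x - s G_s(x)) - F* ≤ ((1 - μs(2-sL))/(2μ))‖G_s(x)‖², where G_s(x) = (x - prox_{sg}(x - s∇f(x)))/s. -/

import Mathlib

open Set Filter Topology
open scoped RealInnerProductSpace

section
variable {H : Type*} [NormedAddCommGroup H] [InnerProductSpace ℝ H] [CompleteSpace H]

lemma line_hasDerivAt (f : H → ℝ) (f' : H → H)
    (hdiff : ∀ w, HasGradientAt f (f' w) w) (x v : H) (t : ℝ) :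
    HasDerivAt (fun t : ℝ => f (x + t • v)) ⟪f' (x + t • v), v⟫ t := by
  have hc : HasDerivAt (fun t : ℝ => x + t • v) v t := by
    simpa using ((hasDerivAt_id t).smul_const v).const_add x
  have hf := hasGradientAt_iff_hasFDerivAt.mp (hdiff (x + t • v))
  have h2 := hf.comp_hasDerivAt t hc
  simp only [InnerProductSpace.toDual_apply_apply] at h2
  exact h2

lemma descent_lemma (f : H → ℝ) (f' : H → H) (L : ℝ) (hL : 0 < L)
    (hdiff : ∀ w, HasGradientAt f (f' w) w)
    (hlip : ∀ w v, ‖f' w - f' v‖ ≤ L * ‖w - v‖) (x v : H) :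
    f (x + v) ≤ f x + ⟪f' x, v⟫ + L / 2 * ‖v‖ ^ 2 := by
  set h' : ℝ → ℝ := fun t => ⟪f' (x + t • v), v⟫ with hh'
  have hd : ∀ t : ℝ, HasDerivAt (fun t : ℝ => f (x + t • v)) (h' t) t :=
    fun t => line_hasDerivAt f f' hdiff x v t
  have hbound : ∀ a b : ℝ, |h' a - h' b| ≤ L * ‖v‖ ^ 2 * |a - b| := by
    intro a b
    have h1 : h' a - h' b = ⟪f' (x + a • v) - f' (x + b • v), v⟫ := by
      simp [hh', inner_sub_left]
    rw [h1]
    have h2 := abs_real_inner_le_norm (f' (x + a • v) - f' (x + b • v)) v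
    have h3 := hlip (x + a • v) (x + b • v)
    have h4 : (x + a • v) - (x + b • v) = (a - b) • v := by module
    rw [h4, norm_smul, Real.norm_eq_abs] at h3
    have hv : (0:ℝ) ≤ ‖v‖ := norm_nonneg v
    nlinarith [mul_le_mul_of_nonneg_right h3 hv]
  have hcont : Continuous h' := by
    refine LipschitzWith.continuous (K := Real.toNNReal (L * ‖v‖^2)) ?_
    apply LipschitzWith.of_dist_le_mul
    intro a b
    have := hbound a b
    simpa [Real.dist_eq, Real.coe_toNNReal _ (by positivity : (0:ℝ) ≤ L*‖v‖^2)] using this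
  have hint : f (x + v) - f x = ∫ t in (0:ℝ)..1, h' t := by
    have := intervalIntegral.integral_eq_sub_of_hasDerivAt
      (f := fun t : ℝ => f (x + t • v)) (f' := h')
      (fun t _ => hd t) (hcont.intervalIntegrable 0 1)
    rw [this]
    simp
  have hmono : ∫ t in (0:ℝ)..1, h' t ≤ ∫ t in (0:ℝ)..1, (h' 0 + L * ‖v‖^2 * t) := by
    apply intervalIntegral.integral_mono_on (by norm_num) (hcont.intervalIntegrable 0 1)
      (Continuous.intervalIntegrable (by fun_prop) 0 1)
    intro t ht
    have h5 := hbound t 0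
    rw [sub_zero, abs_of_nonneg ht.1] at h5
    have := (abs_le.mp h5).2
    linarith
  have hcalc : ∫ t in (0:ℝ)..1, (h' 0 + L * ‖v‖^2 * t) = h' 0 + L * ‖v‖^2 / 2 := by
    rw [intervalIntegral.integral_add intervalIntegrable_const
      (Continuous.intervalIntegrable (by fun_prop) 0 1),
      intervalIntegral.integral_const_mul, integral_id]
    simp
    ring
  have h0 : h' 0 = ⟪f' x, v⟫ := by simp [hh']
  linarith [hint, hmono, hcalc.le, h0.le, h0.ge]

lemma strong_first_order (f : H → ℝ) (f' : H → H) (μ : ℝ)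
    (hf : StrongConvexOn Set.univ μ f)
    (hdiff : ∀ w, HasGradientAt f (f' w) w) (x z : H) :
    f x + ⟪f' x, z - x⟫ + μ / 2 * ‖z - x‖ ^ 2 ≤ f z := by
  set h : ℝ → ℝ := fun t => f (x + t • (z - x)) with hh
  have hd : HasDerivAt h ⟪f' x, z - x⟫ 0 := by
    have := line_hasDerivAt f f' hdiff x (z - x) 0
    simpa using this
  set K : ℝ := μ / 2 * ‖z - x‖ ^ 2 with hK
  have hslope : ∀ t ∈ Ioo (0:ℝ) 1, slope h 0 t ≤ (f z - f x - K) + t * K := by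
    intro t ht
    have hconv := hf.2 (mem_univ x) (mem_univ z)
      (by linarith [ht.2] : (0:ℝ) ≤ 1 - t) ht.1.le (by ring)
    have hpt : (1 - t) • x + t • z = x + t • (z - x) := by module
    rw [hpt] at hconv
    simp only [smul_eq_mul, norm_sub_rev x z] at hconv
    have h0 : h 0 = f x := by simp [hh]
    rw [slope_def_field, h0, sub_zero, div_le_iff₀ ht.1]
    have hht : h t = f (x + t • (z - x)) := rfl
    rw [← hK] at hconv
    nlinarith [hconv, hht]
  have htend : Tendsto (slope h 0) (𝓝[>] 0) (𝓝 ⟪f' x, z - x⟫) := by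
    have h1 := hasDerivAt_iff_tendsto_slope.mp hd
    exact h1.mono_left (nhdsWithin_mono 0 (fun y hy => by
      simpa using ne_of_gt hy))
  have htend2 : Tendsto (fun t : ℝ => (f z - f x - K) + t * K) (𝓝[>] 0)
      (𝓝 (f z - f x - K)) := by
    have hc : Continuous fun t : ℝ => (f z - f x - K) + t * K := by fun_prop
    have h2 := (hc.tendsto 0).mono_left (nhdsWithin_le_nhds (s := Set.Ioi (0:ℝ)))
    simpa using h2
  have hle : ⟪f' x, z - x⟫ ≤ f z - f x - K := by
    refine le_of_tendsto_of_tendsto htend htend2 ?_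
    filter_upwards [Ioo_mem_nhdsGT_of_mem (by constructor <;> norm_num : (0:ℝ) ∈ Ico (0:ℝ) 1)]
      with t ht using hslope t ht
  linarith

lemma prox_subgrad (g : H → ℝ) (hg : ConvexOn ℝ Set.univ g) (s : ℝ) (hs : 0 < s)
    (w p : H) (hmin : IsMinOn (fun u => g u + 1 / (2 * s) * ‖u - w‖ ^ 2) Set.univ p) (z : H) :
    g p + 1 / s * ⟪w - p, z - p⟫ ≤ g z := by
  set a : ℝ := ⟪w - p, z - p⟫ with ha
  set c : ℝ := 1 / (2*s) * ‖z - p‖ ^ 2 with hc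
  have key : ∀ t ∈ Ioo (0:ℝ) 1, 1 / s * a ≤ (g z - g p) + t * c := by
    intro t ht
    have hmin' := isMinOn_iff.mp hmin (p + t • (z - p)) (mem_univ _)
    have hconv := hg.2 (mem_univ p) (mem_univ z)
      (by linarith [ht.2] : (0:ℝ) ≤ 1 - t) ht.1.le (by ring)
    have hpt : (1 - t) • p + t • z = p + t • (z - p) := by module
    rw [hpt] at hconv
    simp only [smul_eq_mul] at hconv
    have hexp : ‖(p + t • (z - p)) - w‖^2
        = ‖p - w‖^2 + 2 * (t * (-a)) + t^2 * ‖z - p‖^2 := by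
      have h1 : (p + t • (z - p)) - w = (p - w) + t • (z - p) := by module
      have h2 : ⟪p - w, z - p⟫ = -a := by
        rw [ha, ← inner_neg_left]
        congr 1
        module
      rw [h1, norm_add_sq_real, real_inner_smul_right, h2, norm_smul, Real.norm_eq_abs,
        mul_pow, sq_abs]
    rw [hexp] at hmin'
    have hrel : (1:ℝ)/s = 2*(1/(2*s)) := by field_simp
    have h3 : 1/(2*s) * (‖p-w‖^2 + 2*(t*(-a)) + t^2*‖z - p‖^2)
        = 1/(2*s)*‖p-w‖^2 - (1/s)*(t*a) + t^2*c := by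
      rw [hc, hrel]; ring
    rw [h3] at hmin'
    have h2 : (1/s)*(t*a) ≤ t*(g z - g p) + t^2*c := by linarith
    have h4 : t * (1/s * a) ≤ t * ((g z - g p) + t*c) := by linear_combination h2
    exact le_of_mul_le_mul_left h4 ht.1
  have htend2 : Tendsto (fun t : ℝ => (g z - g p) + t * c) (𝓝[>] 0) (𝓝 (g z - g p)) := by
    have hcont : Continuous fun t : ℝ => (g z - g p) + t * c := by fun_prop
    have h2 := (hcont.tendsto 0).mono_left (nhdsWithin_le_nhds (s := Set.Ioi (0:ℝ)))
    simpa using h2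
  have hle : 1 / s * a ≤ g z - g p := by
    refine le_of_tendsto_of_tendsto tendsto_const_nhds htend2 ?_
    filter_upwards [Ioo_mem_nhdsGT_of_mem (by constructor <;> norm_num : (0:ℝ) ∈ Ico (0:ℝ) 1)]
      with t ht using key t ht
  linarith


end

/-- Bound on the objective gap after one prox-gradient step. -/
theorem prox_grad_gap_bound
    {H : Type*} [NormedAddCommGroup H] [InnerProductSpace ℝ H] [CompleteSpace H]
    (f : H → ℝ) (f' : H → H) (g : H → ℝ) (L μ s : ℝ)
    (hL : 0 < L) (hμ : 0 < μ)
    (hf : StrongConvexOn Set.univ μ f)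
    (hdiff : ∀ w, HasGradientAt f (f' w) w)
    (hlip : ∀ w v, ‖f' w - f' v‖ ≤ L * ‖w - v‖)
    (hg : ConvexOn ℝ Set.univ g) (hg_lsc : LowerSemicontinuous g)
    (hs : 0 < s) (hsL : s ≤ 1 / L)
    (prox : H → H)
    (hprox : ∀ w, IsMinOn (fun u => g u + 1 / (2 * s) * ‖u - w‖ ^ 2) Set.univ (prox w))
    (F : H → ℝ) (hF : ∀ w, F w = f w + g w)
    (Gs : H → H) (hGs : ∀ w, Gs w = (1 / s) • (w - prox (w - s • f' w)))
    (xstar : H) (hmin : IsMinOn F Set.univ xstar)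
    (x : H) :
    F (x - s • Gs x) - F xstar ≤ (1 - μ * s * (2 - s * L)) / (2 * μ) * ‖Gs x‖ ^ 2 := by
  set p : H := prox (x - s • f' x) with hp
  set G : H := Gs x with hGdef
  have hG : s • G = x - p := by
    rw [hGdef, hGs x, smul_smul, mul_one_div, div_self (ne_of_gt hs), one_smul, hp]
  have hstep : x - s • Gs x = p := by
    rw [← hGdef, hG]; abel
  set z : H := xstar with hz
  set d : H := z - x with hd
  -- (1) descent lemma
  have hpx : p - x = (-s) • G := by
    rw [neg_smul, hG]; abel
  have h1 : f p ≤ f x - s * ⟪f' x, G⟫ + L / 2 * (s ^ 2 * ‖G‖ ^ 2) := by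
    have h10 := descent_lemma f f' L hL hdiff hlip x (p - x)
    rw [add_sub_cancel] at h10
    rw [hpx, real_inner_smul_right, norm_smul, Real.norm_eq_abs, abs_neg,
      abs_of_pos hs, mul_pow] at h10
    linarith [h10]
  -- (2) strong convexity
  have h2 : f x + ⟪f' x, d⟫ + μ / 2 * ‖d‖ ^ 2 ≤ f z :=
    strong_first_order f f' μ hf hdiff x z
  -- (3) prox subgradient
  have h3 : g p + (⟪G, d⟫ - ⟪f' x, d⟫ + s * ‖G‖ ^ 2 - s * ⟪f' x, G⟫) ≤ g z := by
    have h30 := prox_subgrad g hg s hs (x - s • f' x) p (hprox (x - s • f' x)) z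
    have hw : (x - s • f' x) - p = s • (G - f' x) := by
      rw [smul_sub, hG]; abel
    have hzp : z - p = d + s • G := by
      rw [hd, hG]; abel
    rw [hw, hzp] at h30
    have hinner : (1:ℝ) / s * ⟪s • (G - f' x), d + s • G⟫
        = ⟪G, d⟫ - ⟪f' x, d⟫ + s * ‖G‖ ^ 2 - s * ⟪f' x, G⟫ := by
      rw [real_inner_smul_left, inner_sub_left, inner_add_right, inner_add_right,
        real_inner_smul_right, real_inner_smul_right, real_inner_self_eq_norm_sq]
      field_simp
      ring
    rw [hinner] at h30
    exact h30
  -- (4) Young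
  have h4 : 0 ≤ μ ^ 2 * ‖d‖ ^ 2 + 2 * μ * ⟪G, d⟫ + ‖G‖ ^ 2 := by
    have h40 := sq_nonneg ‖μ • d + G‖
    rw [norm_add_sq_real, real_inner_smul_left, norm_smul, Real.norm_eq_abs,
      abs_of_pos hμ, mul_pow, real_inner_comm G d] at h40
    linarith [h40]
  have hC4 : 0 ≤ μ / 2 * ‖d‖ ^ 2 + ⟪G, d⟫ + 1 / (2 * μ) * ‖G‖ ^ 2 := by
    have h5 : μ / 2 * ‖d‖ ^ 2 + ⟪G, d⟫ + 1 / (2 * μ) * ‖G‖ ^ 2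
        = (1 / (2 * μ)) * (μ ^ 2 * ‖d‖ ^ 2 + 2 * μ * ⟪G, d⟫ + ‖G‖ ^ 2) := by
      field_simp
    rw [h5]
    exact mul_nonneg (by positivity) h4
  have hconst : (1 - μ * s * (2 - s * L)) / (2 * μ)
      = 1 / (2 * μ) - s + L / 2 * s ^ 2 := by
    field_simp; ring
  rw [hstep, hF p, hF z, hconst]
  nlinarith [h1, h2, h3, hC4]
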